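/- arXiv:1609.08941 — 2 statements merged into one kernel-verified Lean document; each statement's English description precedes it below -/
import Mathlib

section
/- Let c ∈ ℝ, ε > 0, α ≥ 0, and s ∈ ℂ with Re(s) > 0. The cubic polynomial P(λ) = s + cλ - αsλ² + ελ³ has exactly three roots (with multiplicity), exactly one of which has negative real part and exactly two of which have positive real part. -/
/-!
On the imaginary axis `Re P(iy) = Re s · (1 + α y²) > 0`, so `P` has no purely imaginary root and
`y ↦ arg P(iy)` is continuous; since `P(iy) ~ -iεy³`, it runs from `π/2` at `-∞` to `-π/2` at `+∞`.
Writing `P = ε ∏ (λ - r)`, each factor `iy - r` has a continuous argument whose total change is `+π`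
if `Re r < 0` and `-π` if `Re r > 0`. Two continuous arguments of the same nonvanishing function
differ by a constant, hence `-π = π (n₋ - n₊)` where `n₋`, `n₊` count the roots in the left and
right half-planes; with `n₋ + n₊ = 3` this gives `n₋ = 1`, `n₊ = 2`.
-/

open Polynomial Complex Filter Topology Bornology
open scoped Real

theorem Polynomial.tendsto_eval_div_pow_natDegree {𝕜 : Type*} [NontriviallyNormedField 𝕜]
    (p : 𝕜[X]) :
    Tendsto (fun z => p.eval z / z ^ p.natDegree) (cobounded 𝕜) (𝓝 p.leadingCoeff) := by
  have hrev : Tendsto (fun z : 𝕜 => p.reverse.eval z⁻¹) (cobounded 𝕜) (𝓝 p.leadingCoeff) := by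
    rw [← coeff_zero_reverse, coeff_zero_eq_eval_zero]
    exact (p.reverse.continuous.tendsto 0).comp tendsto_inv₀_cobounded
  refine hrev.congr' ((eventually_ne_cobounded 0).mono fun z hz => ?_)
  -- `p z / z ^ n` is the reversed polynomial evaluated at `z⁻¹`
  let := invertibleOfNonzero hz
  rw [eq_div_iff (pow_ne_zero _ hz)]
  simpa only [invOf_eq_inv, eval₂_id] using eval₂_reverse_mul_pow (RingHom.id 𝕜) z p

theorem tendsto_ofReal_mul_I_cobounded {l : Filter ℝ} (hl : Tendsto (fun y : ℝ => |y|) l atTop) :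
    Tendsto (fun y : ℝ => (y : ℂ) * I) l (cobounded ℂ) := by
  simpa [← tendsto_norm_atTop_iff_cobounded] using hl

theorem tendsto_arg_of_tendsto_div {l : Filter ℝ} {f : ℝ → ℂ} {g : ℝ → ℝ} {z : ℂ}
    (hz : z ∈ slitPlane) (hg : ∀ᶠ y in l, 0 < g y) (hfg : Tendsto (fun y => f y / g y) l (𝓝 z)) :
    Tendsto (fun y => arg (f y)) l (𝓝 (arg z)) :=
  ((continuousAt_arg hz).tendsto.comp hfg).congr' (hg.mono fun y hy => by
    simp only [Function.comp, div_eq_mul_inv, ← ofReal_inv, arg_mul_real (inv_pos.2 hy)])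

theorem Polynomial.tendsto_arg_eval_mul_I_atTop (p : ℂ[X])
    (hp : p.leadingCoeff * I ^ p.natDegree ∈ slitPlane) :
    Tendsto (fun y : ℝ => arg (p.eval (y * I))) atTop
      (𝓝 (arg (p.leadingCoeff * I ^ p.natDegree))) := by
  refine tendsto_arg_of_tendsto_div (g := fun y => y ^ p.natDegree) hp
    ((eventually_gt_atTop 0).mono fun y hy => pow_pos hy _) ?_
  refine ((p.tendsto_eval_div_pow_natDegree.comp
    (tendsto_ofReal_mul_I_cobounded tendsto_abs_atTop_atTop)).mul_const _).congr'
    ((eventually_ne_atTop 0).mono fun y hy => ?_)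
  have : (y : ℂ) ^ p.natDegree ≠ 0 := pow_ne_zero _ (ofReal_ne_zero.2 hy)
  simp only [Function.comp, mul_pow, ofReal_pow]
  field_simp [I_ne_zero]

theorem Polynomial.tendsto_arg_eval_mul_I_atBot (p : ℂ[X])
    (hp : p.leadingCoeff * (-I) ^ p.natDegree ∈ slitPlane) :
    Tendsto (fun y : ℝ => arg (p.eval (y * I))) atBot
      (𝓝 (arg (p.leadingCoeff * (-I) ^ p.natDegree))) := by
  refine tendsto_arg_of_tendsto_div (g := fun y => (-y) ^ p.natDegree) hp
    ((eventually_lt_atBot 0).mono fun y hy => pow_pos (neg_pos.2 hy) _) ?_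
  refine ((p.tendsto_eval_div_pow_natDegree.comp
    (tendsto_ofReal_mul_I_cobounded tendsto_abs_atBot_atTop)).mul_const _).congr'
    ((eventually_ne_atBot 0).mono fun y hy => ?_)
  have : (y : ℂ) ^ p.natDegree ≠ 0 := pow_ne_zero _ (ofReal_ne_zero.2 hy)
  simp only [Function.comp, ofReal_pow, ofReal_neg]
  rw [show (y : ℂ) * I = -y * -I by ring, mul_pow]
  field_simp [I_ne_zero]

def IsContinuousArg (f : ℝ → ℂ) (θ : ℝ → ℝ) : Prop :=
  Continuous θ ∧ ∀ y, (‖f y‖ : ℂ) * exp (θ y * I) = f y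

namespace IsContinuousArg

variable {f g : ℝ → ℂ} {θ φ : ℝ → ℝ}

theorem const (z : ℂ) : IsContinuousArg (fun _ => z) (fun _ => arg z) :=
  ⟨continuous_const, fun _ => norm_mul_exp_arg_mul_I z⟩

theorem of_mem_slitPlane (hf : Continuous f) (hslit : ∀ y, f y ∈ slitPlane) :
    IsContinuousArg f (fun y => arg (f y)) :=
  ⟨continuous_iff_continuousAt.2 fun y => (continuousAt_arg (hslit y)).comp hf.continuousAt,
    fun y => norm_mul_exp_arg_mul_I (f y)⟩

theorem mul (hθ : IsContinuousArg f θ) (hφ : IsContinuousArg g φ) :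
    IsContinuousArg (fun y => f y * g y) (fun y => θ y + φ y) :=
  ⟨hθ.1.add hφ.1, fun y => by
    calc _ = (‖f y‖ * exp (θ y * I)) * (‖g y‖ * exp (φ y * I)) := by
          rw [norm_mul, ofReal_mul, ofReal_add, add_mul, exp_add]; ring
      _ = f y * g y := by rw [hθ.2 y, hφ.2 y]⟩

theorem neg (hθ : IsContinuousArg f θ) : IsContinuousArg (fun y => -f y) (fun y => θ y + π) :=
  ⟨hθ.1.add continuous_const, fun y => by
    rw [norm_neg, ofReal_add, add_mul, exp_add, exp_pi_mul_I, mul_neg_one, mul_neg, hθ.2 y]⟩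

theorem sub_eq_sub (hθ : IsContinuousArg f θ) (hφ : IsContinuousArg f φ) (hf : ∀ y, f y ≠ 0)
    (x y : ℝ) : θ x - φ x = θ y - φ y := by
  -- `θ - φ` is continuous with values in the discrete set `2πℤ`
  refine isPreconnected_univ.constant_of_mapsTo (T := (AddSubgroup.zmultiples (2 * π) : Set ℝ))
    (isDiscrete_iff_discreteTopology.2
      (inferInstanceAs (DiscreteTopology (AddSubgroup.zmultiples (2 * π)))))
    (hθ.1.sub hφ.1).continuousOn (fun y _ => ?_) trivial trivial
  have hexp : exp (((θ y - φ y : ℝ) : ℂ) * I) = 1 := by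
    have h := (hθ.2 y).trans (hφ.2 y).symm
    rw [mul_right_inj' (ofReal_ne_zero.2 (norm_ne_zero_iff.2 (hf y)))] at h
    rw [ofReal_sub, sub_mul, exp_sub, h, div_self (exp_ne_zero _)]
  obtain ⟨n, hn⟩ := exp_eq_one_iff.1 hexp
  refine ⟨n, ofReal_injective (mul_right_cancel₀ I_ne_zero ?_)⟩
  rw [Pi.sub_apply, hn, ofReal_zsmul, zsmul_eq_mul]
  push_cast
  ring

theorem atBot_sub_atTop_eq (hθ : IsContinuousArg f θ) (hφ : IsContinuousArg f φ)
    (hf : ∀ y, f y ≠ 0) {a b a' b' : ℝ} (ha : Tendsto θ atTop (𝓝 a)) (hb : Tendsto θ atBot (𝓝 b))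
    (ha' : Tendsto φ atTop (𝓝 a')) (hb' : Tendsto φ atBot (𝓝 b')) : b - a = b' - a' := by
  have hθφ : θ = fun y => φ y + (θ 0 - φ 0) :=
    funext fun y => by linarith [hθ.sub_eq_sub hφ hf y 0]
  rw [hθφ] at ha hb
  linarith [tendsto_nhds_unique ha (ha'.add_const _), tendsto_nhds_unique hb (hb'.add_const _)]

end IsContinuousArg

theorem exists_isContinuousArg_mul_I_sub_of_re_neg {r : ℂ} (hr : r.re < 0) :
    ∃ φ, IsContinuousArg (fun y : ℝ => y * I - r) φ ∧
      Tendsto φ atTop (𝓝 (π / 2)) ∧ Tendsto φ atBot (𝓝 (-(π / 2))) := by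
  have hslit : ∀ y : ℝ, (y : ℂ) * I - r ∈ slitPlane := fun y => by
    simp [mem_slitPlane_iff, hr]
  have htop := (X - C r).tendsto_arg_eval_mul_I_atTop (by simp [mem_slitPlane_iff])
  have hbot := (X - C r).tendsto_arg_eval_mul_I_atBot (by simp [mem_slitPlane_iff])
  simp only [natDegree_X_sub_C, leadingCoeff_X_sub_C, eval_sub, eval_X, eval_C] at htop hbot
  refine ⟨_, .of_mem_slitPlane (by fun_prop) hslit, ?_, ?_⟩
  · simpa using htop
  · simpa using hbot

theorem exists_isContinuousArg_mul_I_sub_of_re_pos {r : ℂ} (hr : 0 < r.re) :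
    ∃ φ, IsContinuousArg (fun y : ℝ => y * I - r) φ ∧
      Tendsto φ atTop (𝓝 (π / 2)) ∧ Tendsto φ atBot (𝓝 (π / 2 + π)) := by
  have hslit : ∀ y : ℝ, r - (y : ℂ) * I ∈ slitPlane := fun y => by
    simp [mem_slitPlane_iff, hr]
  have hdeg : (-(X - C r)).natDegree = 1 := by rw [natDegree_neg, natDegree_X_sub_C]
  have hlead : (-(X - C r)).leadingCoeff = -1 := by rw [leadingCoeff_neg, leadingCoeff_X_sub_C]
  have htop := (-(X - C r)).tendsto_arg_eval_mul_I_atTop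
    (by rw [hdeg, hlead]; simp [mem_slitPlane_iff])
  have hbot := (-(X - C r)).tendsto_arg_eval_mul_I_atBot
    (by rw [hdeg, hlead]; simp [mem_slitPlane_iff])
  rw [hdeg, hlead] at htop hbot
  simp only [eval_sub, eval_X, eval_C, neg_sub] at htop hbot
  refine ⟨_, by simpa using (IsContinuousArg.of_mem_slitPlane (by fun_prop) hslit).neg, ?_, ?_⟩
  · convert htop.add_const π using 2
    simp only [pow_one, neg_mul, one_mul, arg_neg_I]; ring
  · convert hbot.add_const π using 2
    simp

theorem exists_isContinuousArg_prod_mul_I_sub (S : Multiset ℂ) (hS : ∀ r ∈ S, r.re ≠ 0) :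
    ∃ (Φ : ℝ → ℝ) (L : ℝ), IsContinuousArg (fun y => (S.map fun r => y * I - r).prod) Φ ∧
      Tendsto Φ atTop (𝓝 L) ∧
      Tendsto Φ atBot (𝓝 (L + π * ((S.filter (0 < ·.re)).card - (S.filter (·.re < 0)).card))) := by
  induction S using Multiset.induction_on with
  | empty => exact ⟨fun _ => 0, 0, by simpa using IsContinuousArg.const 1, tendsto_const_nhds,
      by simp⟩
  | cons r S ih =>
    obtain ⟨Φ, L, hΦ, hL, hL'⟩ := ih fun x hx => hS x (Multiset.mem_cons_of_mem hx)
    rcases (hS r (Multiset.mem_cons_self r S)).lt_or_gt with hr | hr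
    · obtain ⟨φ, hφ, htop, hbot⟩ := exists_isContinuousArg_mul_I_sub_of_re_neg hr
      refine ⟨_, _, by simpa using hφ.mul hΦ, htop.add hL, ?_⟩
      convert hbot.add hL' using 2
      simp only [Multiset.filter_cons_of_pos, Multiset.filter_cons_of_neg, hr, hr.not_gt,
        not_false_eq_true, Multiset.card_cons, Nat.cast_add, Nat.cast_one]
      ring
    · obtain ⟨φ, hφ, htop, hbot⟩ := exists_isContinuousArg_mul_I_sub_of_re_pos hr
      refine ⟨_, _, by simpa using hφ.mul hΦ, htop.add hL, ?_⟩
      convert hbot.add hL' using 2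
      simp only [Multiset.filter_cons_of_pos, Multiset.filter_cons_of_neg, hr, hr.not_gt,
        not_false_eq_true, Multiset.card_cons, Nat.cast_add, Nat.cast_one]
      ring

theorem Polynomial.arg_variation_eq_pi_mul_card_roots_re_pos_sub_re_neg {p : ℂ[X]}
    (hp : p ≠ 0) (hroots : ∀ r ∈ p.roots, r.re ≠ 0) {θ : ℝ → ℝ} {a b : ℝ}
    (hθ : IsContinuousArg (fun y => p.eval (y * I)) θ) (ha : Tendsto θ atTop (𝓝 a))
    (hb : Tendsto θ atBot (𝓝 b)) :
    b - a = π * ((p.roots.filter (0 < ·.re)).card - (p.roots.filter (·.re < 0)).card) := by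
  obtain ⟨Φ, L, hΦ, hL, hL'⟩ := exists_isContinuousArg_prod_mul_I_sub p.roots hroots
  have hfactor : ∀ y : ℝ, p.eval (y * I) =
      p.leadingCoeff * (p.roots.map fun r => y * I - r).prod := fun y => by
    conv_lhs =>
      rw [← C_leadingCoeff_mul_prod_multiset_X_sub_C (p := p) IsAlgClosed.card_roots_eq_natDegree]
    simp [eval_multiset_prod, Multiset.map_map]
  have hlift : IsContinuousArg (fun y => p.eval (y * I)) (fun y => arg p.leadingCoeff + Φ y) := by
    simpa only [hfactor] using (IsContinuousArg.const _).mul hΦ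
  have hne : ∀ y : ℝ, p.eval (y * I) ≠ 0 := fun y h =>
    hroots _ ((mem_roots hp).2 h) (by simp)
  linarith [hθ.atBot_sub_atTop_eq hlift hne ha hb (hL.const_add _) (hL'.const_add _)]

theorem Polynomial.re_ne_zero_of_mem_roots_of_re_pos {p : ℂ[X]}
    (hre : ∀ y : ℝ, 0 < (p.eval (y * I)).re) {r : ℂ} (hr : r ∈ p.roots) : r.re ≠ 0 := fun h0 => by
  have h := hre r.im
  rwa [show (r.im : ℂ) * I = r by apply Complex.ext <;> simp [h0], (mem_roots' .. |>.1 hr).2,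
    zero_re, lt_self_iff_false] at h

theorem Multiset.card_filter_re_pos_add_card_filter_re_neg {S : Multiset ℂ}
    (hS : ∀ r ∈ S, r.re ≠ 0) :
    (S.filter (0 < ·.re)).card + (S.filter (·.re < 0)).card = S.card := by
  conv_rhs => rw [← Multiset.filter_add_not (0 < ·.re) S, Multiset.card_add]
  simp only [not_lt]
  rw [Multiset.filter_congr fun r hr => (hS r hr).le_iff_lt]

theorem Polynomial.tendsto_arg_eval_mul_I_of_natDegree_eq_three {p : ℂ[X]} (hdeg : p.natDegree = 3)
    {ε : ℝ} (hε : 0 < ε) (hlead : p.leadingCoeff = ε) :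
    Tendsto (fun y : ℝ => arg (p.eval (y * I))) atTop (𝓝 (-(π / 2))) ∧
      Tendsto (fun y : ℝ => arg (p.eval (y * I))) atBot (𝓝 (π / 2)) := by
  have hlimTop : p.leadingCoeff * I ^ p.natDegree = ε * -I := by rw [hlead, hdeg, I_pow_three]
  have hlimBot : p.leadingCoeff * (-I) ^ p.natDegree = ε * I := by
    rw [hlead, hdeg, Odd.neg_pow (by decide), I_pow_three, neg_neg]
  have htop := p.tendsto_arg_eval_mul_I_atTop (by simp [hlimTop, mem_slitPlane_iff, hε.ne'])
  have hbot := p.tendsto_arg_eval_mul_I_atBot (by simp [hlimBot, mem_slitPlane_iff, hε.ne'])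
  rw [hlimTop, arg_real_mul _ hε, arg_neg_I] at htop
  rw [hlimBot, arg_real_mul _ hε, arg_I] at hbot
  exact ⟨htop, hbot⟩

theorem re_eval_mul_I_cubic (c α ε : ℝ) (s : ℂ) (y : ℝ) :
    (eval ((y : ℂ) * I) (C s + C (c : ℂ) * X - C ((α : ℂ) * s) * X ^ 2 + C (ε : ℂ) * X ^ 3)).re =
      s.re * (1 + α * y ^ 2) := by
  simp only [map_mul, eval_add, eval_sub, eval_C, eval_mul, eval_X, eval_pow, mul_pow, ← ofReal_pow,
    I_sq, I_pow_three, add_re, sub_re, mul_re, neg_re, ofReal_re, ofReal_im, I_re, I_im,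
    mul_neg, mul_one]
  ring

/-- The cubic `P(λ) = s + cλ - αsλ² + ελ³` (with `ε > 0`, `α ≥ 0`, `Re s > 0`) has exactly
three roots with multiplicity, exactly one with negative real part and exactly two with
positive real part. -/
theorem stmt_1 (c α ε : ℝ) (hα : 0 ≤ α) (hε : 0 < ε) (s : ℂ) (hs : 0 < s.re) :
    let P : Polynomial ℂ := C s + C (c : ℂ) * X - C ((α : ℂ) * s) * X ^ 2 + C (ε : ℂ) * X ^ 3
    Multiset.card P.roots = 3 ∧
    Multiset.card (P.roots.filter (fun z => z.re < 0)) = 1 ∧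
    Multiset.card (P.roots.filter (fun z => 0 < z.re)) = 2 := by
  intro P
  have hε' : (ε : ℂ) ≠ 0 := ofReal_ne_zero.2 hε.ne'
  have hcubic : P = C (ε : ℂ) * X ^ 3 + C (-(α * s)) * X ^ 2 + C (c : ℂ) * X + C s := by
    simp only [P, map_neg]; ring
  have hdeg : P.natDegree = 3 := hcubic ▸ natDegree_cubic hε'
  have hlead : P.leadingCoeff = ε := hcubic ▸ leadingCoeff_cubic hε'
  have hP : P ≠ 0 := ne_zero_of_natDegree_gt (n := 0) (by omega)
  have hre : ∀ y : ℝ, 0 < (P.eval (y * I)).re := fun y => by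
    rw [re_eval_mul_I_cubic]; positivity
  have hroots : ∀ r ∈ P.roots, r.re ≠ 0 := fun r => P.re_ne_zero_of_mem_roots_of_re_pos hre
  obtain ⟨htop, hbot⟩ := P.tendsto_arg_eval_mul_I_of_natDegree_eq_three hdeg hε hlead
  have hwind := P.arg_variation_eq_pi_mul_card_roots_re_pos_sub_re_neg hP hroots
    (.of_mem_slitPlane (by fun_prop) fun y => Or.inl (hre y)) htop hbot
  have hdiff : ((P.roots.filter (0 < ·.re)).card : ℝ) = (P.roots.filter (·.re < 0)).card + 1 := by
    have := hwind.symm.trans (by ring : π / 2 - -(π / 2) = π * 1)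
    linarith [mul_left_cancel₀ Real.pi_ne_zero this]
  have hcard : P.roots.card = 3 := by rw [IsAlgClosed.card_roots_eq_natDegree, hdeg]
  have hsum := Multiset.card_filter_re_pos_add_card_filter_re_neg hroots
  have hcount : (P.roots.filter (0 < ·.re)).card = (P.roots.filter (·.re < 0)).card + 1 := by
    exact_mod_cast hdiff
  omega
end

section
/- Let λ₁ be a complex number satisfying λ₁³ + (2/(εδt))w = 0 for a parameter w, with ε, δt > 0. Define, up to O(δx⁴): s^s = λ₁δx + (λ₁²/2)δx² + (w/(3εδt))δx³, s^u = 2 - λ₁δx - (λ₁²/2)δx² - (w/(3εδt))δx³, p^s = -1 - λ₁δx - (λ₁²/2)δx² + (2w/(3εδt))δx³, p^u = 1 - λ₁δx + (λ₁²/2)δx² + (2w/(3εδt))δx³. Then these satisfy, up to O(δx⁴): s^s + s^u = 2, s^s s^u + p^s + p^u = (4δx³/(εδt))w, s^s p^u + s^u p^s = -2, p^s p^u = -1. -/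
open Polynomial

set_option maxHeartbeats 1000000 in
/-- Asymptotic factorization coefficients for the linearized KdV Crank–Nicolson scheme:
with `λ₁³ + (2/(εδt))w = 0`, the truncated expansions `s^s, s^u, p^s, p^u` (polynomials in
`δx`) satisfy the Vieta system of the quartic `r⁴ - 2r³ + (4δx³/(εδt))w r² + 2r - 1`
modulo `δx⁴`. -/
theorem stmt_16 (ε δt : ℝ) (hε : 0 < ε) (hδt : 0 < δt) (w l₁ : ℂ)
    (hl : l₁ ^ 3 + (2 / ((ε : ℂ) * δt)) * w = 0) :
    let ss : Polynomial ℂ := C l₁ * X + C (l₁ ^ 2 / 2) * X ^ 2 + C (w / (3 * ε * δt)) * X ^ 3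
    let su : Polynomial ℂ := C 2 - C l₁ * X - C (l₁ ^ 2 / 2) * X ^ 2 - C (w / (3 * ε * δt)) * X ^ 3
    let ps : Polynomial ℂ := -C 1 - C l₁ * X - C (l₁ ^ 2 / 2) * X ^ 2 + C (2 * w / (3 * ε * δt)) * X ^ 3
    let pu : Polynomial ℂ := C 1 - C l₁ * X + C (l₁ ^ 2 / 2) * X ^ 2 + C (2 * w / (3 * ε * δt)) * X ^ 3
    (X : Polynomial ℂ) ^ 4 ∣ (ss + su - C 2) ∧
    (X : Polynomial ℂ) ^ 4 ∣ (ss * su + ps + pu - C (4 * w / (ε * δt)) * X ^ 3) ∧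
    (X : Polynomial ℂ) ^ 4 ∣ (ss * pu + su * ps + C 2) ∧
    (X : Polynomial ℂ) ^ 4 ∣ (ps * pu + C 1) := by
  intro ss su ps pu
  have hε' : (ε : ℂ) ≠ 0 := by exact_mod_cast hε.ne'
  have hδt' : (δt : ℂ) ≠ 0 := by exact_mod_cast hδt.ne'
  have hw : w = -((ε:ℂ)*δt)/2 * l₁^3 := by
    field_simp at hl
    linear_combination hl / 2
  subst hw
  have h6 : -((ε:ℂ)*δt)/2*l₁^3/(3*(ε:ℂ)*(δt:ℂ)) = -l₁^3/6 := by
    field_simp; ring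
  have h3 : 2*(-((ε:ℂ)*δt)/2*l₁^3)/(3*(ε:ℂ)*(δt:ℂ)) = -l₁^3/3 := by
    field_simp
  have h2 : 4*(-((ε:ℂ)*δt)/2*l₁^3)/((ε:ℂ)*(δt:ℂ)) = -2*l₁^3 := by
    field_simp; ring
  refine ⟨⟨0, ?_⟩,
    ⟨C (l₁^4/12) + C (l₁^5/6) * X - C (l₁^6/36) * X^2, ?_⟩,
    ⟨C (l₁^4/2) - C (l₁^5/6) * X, ?_⟩,
    ⟨C (5*l₁^4/12) + C (l₁^6/9) * X^2, ?_⟩⟩ <;>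
  · apply Polynomial.funext
    intro x
    simp only [ss, su, ps, pu, eval_add, eval_sub, eval_mul, eval_pow, eval_neg, eval_C, eval_X,
      eval_zero]
    simp only [h6, h3, h2]
    ring
end
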